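/- arXiv:hep-th/0605067 — 4 statements merged into one kernel-verified Lean document; each statement's English description precedes it below -/
import Mathlib

section
/- Let A be a unital associative ℂ-algebra equipped with a star operation that is a conjugate-linear anti-automorphism (a star ring structure with star(c • x) = conj(c) • star(x) for c ∈ ℂ). Let γ_*, S ∈ A satisfy γ_*² = 1, S² = 1, γ_* S + S γ_* = 0, star(γ_*) = γ_*, and star(S) = S. For θ ∈ ℝ set e^{θ γ_*} := cosh(θ) · 1 + sinh(θ) · γ_* and Π_+ := (1/2)(1 + i e^{θ γ_*} γ_* S). Then Π_+ · star(Π_+) = (1/2) cosh(θ) ( cosh(θ) · 1 + sinh(θ) · γ_* + i γ_* S ). -/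
/-- In a star ℂ-algebra with self-adjoint `γ_*`, `S` satisfying
`γ_*² = 1`, `S² = 1`, `γ_* S + S γ_* = 0`, the projector
`Π_+ = (1/2)(1 + i e^{θγ_*} γ_* S)` satisfies
`Π_+ Π_+* = (1/2) cosh θ (cosh θ + sinh θ γ_* + i γ_* S)`. -/
theorem stmt_4 {A : Type*} [Ring A] [Algebra ℂ A] [StarRing A] [StarModule ℂ A]
    (γs S : A)
    (hγ : γs ^ 2 = 1) (hS : S ^ 2 = 1) (hanti : γs * S + S * γs = 0)
    (hγstar : star γs = γs) (hSstar : star S = S) (θ : ℝ) :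
    let e : A := (Real.cosh θ : ℂ) • (1 : A) + (Real.sinh θ : ℂ) • γs
    let Pp : A := (1 / 2 : ℂ) • ((1 : A) + Complex.I • (e * γs * S))
    Pp * star Pp
      = ((1 / 2 : ℂ) * (Real.cosh θ : ℂ)) •
        ((Real.cosh θ : ℂ) • (1 : A) + (Real.sinh θ : ℂ) • γs
          + Complex.I • (γs * S)) := by
  intro e Pp
  have hγ' : ∀ x : A, γs * (γs * x) = x := by
    intro x; rw [← mul_assoc, ← sq, hγ, one_mul]
  have hS' : ∀ x : A, S * (S * x) = x := by
    intro x; rw [← mul_assoc, ← sq, hS, one_mul]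
  have h3 : S * γs = -(γs * S) := eq_neg_of_add_eq_zero_right hanti
  have h4 : ∀ x : A, S * (γs * x) = -(γs * (S * x)) := by
    intro x; rw [← mul_assoc, h3, neg_mul, mul_assoc]
  have hγ2 : γs * γs = 1 := by rw [← sq, hγ]
  have hS2 : S * S = 1 := by rw [← sq, hS]
  show Pp * star Pp = _
  simp only [Pp, e, star_smul, star_add, star_mul, star_one, star_smul,
    hγstar, hSstar, Complex.star_def, map_one, map_div₀, map_ofNat,
    Complex.conj_I, Complex.conj_ofReal]
  simp only [smul_add, smul_smul, mul_add, add_mul, smul_mul_assoc,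
    mul_smul_comm, mul_one, one_mul, mul_assoc, h4, h3, hγ', hS', hγ2, hS2,
    neg_mul, mul_neg, smul_neg, neg_smul, neg_neg]
  have hI : (Complex.I : ℂ) ^ 2 = -1 := Complex.I_sq
  have hc : Complex.cosh θ ^ 2 - Complex.sinh θ ^ 2 = 1 := Complex.cosh_sq_sub_sinh_sq θ
  match_scalars
  · linear_combination (-(1/4 : ℂ) * (Complex.cosh θ ^ 2 + Complex.sinh θ ^ 2)) * hI
      + (-(1/4 : ℂ)) * hc
  · ring
  · ring
  · linear_combination (-(1/2 : ℂ) * Complex.cosh θ * Complex.sinh θ) * hI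
end

section
/- Let ν > 0 be real and λ ∈ ℝ, λ ≠ 0. Define f, g : (0, ∞) → ℂ by f(r) = r^{1/2 − ν} J_{ν − 1/2}(|λ| r) and g(r) = − i · sgn(λ) · r^{1/2 − ν} J_{ν + 1/2}(|λ| r). Then f and g are differentiable on (0, ∞) and satisfy the coupled first-order radial Dirac system: i f′(r) = λ g(r) and i g′(r) = λ f(r) − (2 i ν / r) g(r) for all r > 0. -/
open scoped Real

/-- Bessel function of the first kind of real order `μ` (for `x > 0`), defined by its
power series `J_μ(x) = ∑_{k} (−1)^k (x/2)^{μ+2k} / (k! Γ(μ+k+1))` with real powers. -/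
noncomputable def besselJ (μ : ℝ) (x : ℝ) : ℝ :=
  ∑' k : ℕ, (-1 : ℝ) ^ k * (x / 2) ^ (μ + 2 * (k : ℝ)) /
    ((k.factorial : ℝ) * Real.Gamma (μ + k + 1))

/-- The radial profiles `f(r) = r^{1/2−ν} J_{ν−1/2}(|λ|r)` and
`g(r) = −i sgn(λ) r^{1/2−ν} J_{ν+1/2}(|λ|r)` of the Dirac eigenspinors. -/
noncomputable def fRad (ν lam : ℝ) (r : ℝ) : ℂ :=
  ((r ^ ((1 : ℝ) / 2 - ν) * besselJ (ν - 1 / 2) (|lam| * r) : ℝ) : ℂ)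

noncomputable def gRad (ν lam : ℝ) (r : ℝ) : ℂ :=
  -Complex.I * (Real.sign lam : ℂ) *
    ((r ^ ((1 : ℝ) / 2 - ν) * besselJ (ν + 1 / 2) (|lam| * r) : ℝ) : ℂ)

/-!
With the entire function `E_μ(z) = ∑ (-z)^k / (k! Γ(μ + k))` (the regularized `₀F₁(; μ; -z)`)
one has `J_μ(x) = (x/2)^μ E_{μ+1}((x/2)²)`, so both profiles are powers of `r` times `E` evaluated
at `(|λ| r / 2)²`. Termwise differentiation gives `E_μ' = -E_{μ+1}`, and
`Γ(μ + k + 1) = (μ + k) Γ(μ + k)` gives the contiguous relation `E_μ = μ E_{μ+1} - z E_{μ+2}`.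
These are exactly the derivative formulas for `r^{-μ} J_μ(ar)` and `r^{-μ} J_{μ+1}(ar)` that make
up the Dirac system at `μ = ν - 1/2`.
-/

open Filter Topology Nat

theorem hasDerivAt_tsum_mul_pow {c : ℕ → ℝ}
    (hc : ∀ R, Summable fun k => (k + 1) * |c (k + 1)| * R ^ k) (x : ℝ) :
    HasDerivAt (fun y => ∑' k, c k * y ^ k) (∑' k, (k + 1) * c (k + 1) * x ^ k) x := by
  set R := |x| + 1
  have hu : Summable fun k => k * |c k| * R ^ (k - 1) :=
    (summable_nat_add_iff 1).1 (by simpa using hc R)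
  have hbound : ∀ (k : ℕ), ∀ y ∈ Metric.ball (0 : ℝ) R,
      ‖c k * (k * y ^ (k - 1))‖ ≤ k * |c k| * R ^ (k - 1) := by
    intro k y hy
    rw [mem_ball_zero_iff] at hy
    rw [norm_mul, norm_mul, norm_pow, Real.norm_natCast, Real.norm_eq_abs, mul_left_comm,
      ← mul_assoc]
    gcongr
  have h0 : Summable fun k => c k * (0 : ℝ) ^ k :=
    summable_of_ne_finset_zero (s := {0}) fun k hk => by simp_all
  have hx : x ∈ Metric.ball (0 : ℝ) R := by simp [R]
  have hshift : Summable fun k => (k + 1) * c (k + 1) * x ^ k :=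
    .of_norm <| (hc |x|).congr fun k => by
      rw [norm_mul, norm_mul, norm_pow, Real.norm_eq_abs, Real.norm_eq_abs, Real.norm_eq_abs,
        abs_of_nonneg (by positivity : (0 : ℝ) ≤ k + 1)]
  have hderiv := hasDerivAt_tsum_of_isPreconnected hu Metric.isOpen_ball
    (convex_ball (0 : ℝ) R).isPreconnected
    (fun k y _ => (hasDerivAt_pow k y).const_mul (c k)) hbound
    (Metric.mem_ball_self (by positivity)) h0 hx
  rw [tsum_eq_zero_add' (by simpa [mul_comm, mul_left_comm] using hshift)] at hderiv
  simpa [mul_comm, mul_left_comm] using hderiv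

noncomputable def besselCoeff (μ : ℝ) (k : ℕ) : ℝ := (-1) ^ k / (k ! * Real.Gamma (μ + k))

noncomputable def besselEntire (μ z : ℝ) : ℝ := ∑' k, besselCoeff μ k * z ^ k

theorem succ_mul_besselCoeff_succ (μ : ℝ) (k : ℕ) :
    (k + 1) * besselCoeff μ (k + 1) = -besselCoeff (μ + 1) k := by
  have hΓ : Real.Gamma (μ + (k + 1 : ℕ)) = Real.Gamma (μ + 1 + k) := by push_cast; ring_nf
  rw [besselCoeff, besselCoeff, hΓ, factorial_succ, pow_succ, cast_mul, cast_add_one]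
  field_simp

theorem besselCoeff_eq_mul_besselCoeff_add_one {μ : ℝ} (hμ : 0 < μ) (k : ℕ) :
    besselCoeff μ k = (μ + k) * besselCoeff (μ + 1) k := by
  have hμk : μ + k ≠ 0 := by positivity
  rw [besselCoeff, besselCoeff, add_right_comm, Real.Gamma_add_one hμk]
  field_simp

theorem abs_besselCoeff_le_inv_factorial {μ : ℝ} {k : ℕ} (h : 2 ≤ μ + k) :
    |besselCoeff μ k| ≤ 1 / k ! := by
  have hΓ : 1 ≤ Real.Gamma (μ + k) := by
    simpa [Real.Gamma_two] using
      Real.Gamma_strictMonoOn_Ici.monotoneOn (Set.mem_Ici.2 le_rfl) (Set.mem_Ici.2 h) h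
  rw [besselCoeff, abs_div, abs_pow, abs_neg, abs_one, one_pow,
    abs_of_pos (by positivity : (0 : ℝ) < k ! * Real.Gamma (μ + k))]
  gcongr
  exact le_mul_of_one_le_right (by positivity) hΓ

theorem summable_abs_besselCoeff_mul_pow (μ R : ℝ) :
    Summable fun k => |besselCoeff μ k| * R ^ k := by
  refine .of_norm_bounded_eventually (Real.summable_pow_div_factorial |R|) ?_
  filter_upwards [Nat.cofinite_eq_atTop ▸ eventually_ge_atTop ⌈2 - μ⌉₊] with k hk
  have h2 : 2 ≤ μ + k := by linarith [(Nat.ceil_le.1 hk)]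
  rw [norm_mul, norm_pow, Real.norm_eq_abs, Real.norm_eq_abs, abs_abs, div_eq_mul_one_div,
    mul_comm (|R| ^ k)]
  gcongr
  exact abs_besselCoeff_le_inv_factorial h2

theorem summable_besselCoeff_mul_pow (μ z : ℝ) : Summable fun k => besselCoeff μ k * z ^ k :=
  .of_norm <| (summable_abs_besselCoeff_mul_pow μ |z|).congr fun k => by
    rw [norm_mul, norm_pow, Real.norm_eq_abs, Real.norm_eq_abs]

theorem hasDerivAt_besselEntire (μ z : ℝ) :
    HasDerivAt (besselEntire μ) (-besselEntire (μ + 1) z) z := by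
  have hc (R : ℝ) : Summable fun k => (k + 1) * |besselCoeff μ (k + 1)| * R ^ k :=
    (summable_abs_besselCoeff_mul_pow (μ + 1) R).congr fun k => by
      rw [← abs_of_nonneg (by positivity : (0 : ℝ) ≤ k + 1), ← abs_mul,
        succ_mul_besselCoeff_succ, abs_neg]
  have h := hasDerivAt_tsum_mul_pow hc z
  simp only [succ_mul_besselCoeff_succ, neg_mul, tsum_neg] at h
  exact h

theorem besselEntire_eq_mul_sub_mul {μ : ℝ} (hμ : 0 < μ) (z : ℝ) :
    besselEntire μ z = μ * besselEntire (μ + 1) z - z * besselEntire (μ + 1 + 1) z := by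
  have hsum : Summable fun k : ℕ => k * besselCoeff (μ + 1) k * z ^ k := by
    refine (summable_nat_add_iff 1).1
      (((summable_besselCoeff_mul_pow (μ + 1 + 1) z).mul_left (-z)).congr fun k => ?_)
    rw [cast_add_one, succ_mul_besselCoeff_succ, pow_succ]
    ring
  have hshift : ∑' k : ℕ, k * besselCoeff (μ + 1) k * z ^ k
      = -(z * besselEntire (μ + 1 + 1) z) := by
    rw [hsum.tsum_eq_zero_add, besselEntire, ← tsum_mul_left, ← tsum_neg]
    simp only [CharP.cast_eq_zero, zero_mul, zero_add, cast_add_one]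
    refine tsum_congr fun k => ?_
    rw [succ_mul_besselCoeff_succ, pow_succ]
    ring
  calc besselEntire μ z
      = ∑' k : ℕ, (μ * (besselCoeff (μ + 1) k * z ^ k) + k * besselCoeff (μ + 1) k * z ^ k) :=
        tsum_congr fun k => by rw [besselCoeff_eq_mul_besselCoeff_add_one hμ]; ring
    _ = μ * besselEntire (μ + 1) z + ∑' k : ℕ, k * besselCoeff (μ + 1) k * z ^ k := by
        rw [((summable_besselCoeff_mul_pow (μ + 1) z).mul_left μ).tsum_add hsum, tsum_mul_left,
          besselEntire]
    _ = μ * besselEntire (μ + 1) z - z * besselEntire (μ + 1 + 1) z := by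
        rw [hshift, sub_eq_add_neg]

theorem besselJ_eq_rpow_mul_besselEntire (μ : ℝ) {x : ℝ} (hx : 0 < x) :
    besselJ μ x = (x / 2) ^ μ * besselEntire (μ + 1) ((x / 2) ^ 2) := by
  rw [besselJ, besselEntire, ← tsum_mul_left]
  refine tsum_congr fun k => ?_
  rw [Real.rpow_add (by positivity), show 2 * (k : ℝ) = ((2 * k : ℕ) : ℝ) by push_cast; ring,
    Real.rpow_natCast, pow_mul, besselCoeff, add_right_comm μ]
  ring

theorem rpow_neg_mul_besselJ_mul (μ p : ℝ) {a r : ℝ} (ha : 0 < a) (hr : 0 < r) :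
    r ^ (-μ) * besselJ p (a * r)
      = (a / 2) ^ p * r ^ (p - μ) * besselEntire (p + 1) ((a * r / 2) ^ 2) := by
  rw [besselJ_eq_rpow_mul_besselEntire p (by positivity), show a * r / 2 = a / 2 * r by ring,
    Real.mul_rpow (by positivity) hr.le, Real.rpow_sub hr, Real.rpow_neg hr.le]
  ring

theorem hasDerivAt_mul_div_two_sq (a r : ℝ) :
    HasDerivAt (fun s => (a * s / 2) ^ 2) (a ^ 2 * r / 2) r := by
  refine ((((hasDerivAt_id' r).const_mul a).div_const 2).fun_pow 2).congr_deriv ?_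
  norm_num
  ring

theorem hasDerivAt_rpow_neg_mul_besselJ (μ : ℝ) {a r : ℝ} (ha : 0 < a) (hr : 0 < r) :
    HasDerivAt (fun s => s ^ (-μ) * besselJ μ (a * s))
      (-a * (r ^ (-μ) * besselJ (μ + 1) (a * r))) r := by
  have heq : (fun s => s ^ (-μ) * besselJ μ (a * s))
      =ᶠ[𝓝 r] fun s => (a / 2) ^ μ * besselEntire (μ + 1) ((a * s / 2) ^ 2) := by
    filter_upwards [Ioi_mem_nhds hr] with s hs
    rw [rpow_neg_mul_besselJ_mul μ μ ha hs, sub_self, Real.rpow_zero, mul_one]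
  refine (((hasDerivAt_besselEntire (μ + 1) _).comp r (hasDerivAt_mul_div_two_sq a r)).const_mul
    _).congr_of_eventuallyEq heq |>.congr_deriv ?_
  rw [rpow_neg_mul_besselJ_mul μ (μ + 1) ha hr, add_sub_cancel_left, Real.rpow_one,
    Real.rpow_add_one (by positivity)]
  ring

theorem hasDerivAt_rpow_neg_mul_besselJ_add_one {μ a r : ℝ} (hμ : -1 < μ) (ha : 0 < a)
    (hr : 0 < r) :
    HasDerivAt (fun s => s ^ (-μ) * besselJ (μ + 1) (a * s))
      (a * (r ^ (-μ) * besselJ μ (a * r))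
        - (2 * μ + 1) / r * (r ^ (-μ) * besselJ (μ + 1) (a * r))) r := by
  have heq : (fun s => s ^ (-μ) * besselJ (μ + 1) (a * s))
      =ᶠ[𝓝 r] fun s => (a / 2) ^ (μ + 1) * (s * besselEntire (μ + 1 + 1) ((a * s / 2) ^ 2)) := by
    filter_upwards [Ioi_mem_nhds hr] with s hs
    rw [rpow_neg_mul_besselJ_mul μ (μ + 1) ha hs, add_sub_cancel_left, Real.rpow_one, mul_assoc]
  refine (((hasDerivAt_id r).mul ((hasDerivAt_besselEntire (μ + 1 + 1) _).comp r
    (hasDerivAt_mul_div_two_sq a r))).const_mul _).congr_of_eventuallyEq heq |>.congr_deriv ?_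
  rw [rpow_neg_mul_besselJ_mul μ μ ha hr, rpow_neg_mul_besselJ_mul μ (μ + 1) ha hr, sub_self,
    add_sub_cancel_left, Real.rpow_zero, Real.rpow_one,
    besselEntire_eq_mul_sub_mul (by linarith : 0 < μ + 1), Real.rpow_add_one (by positivity)]
  simp only [Function.comp_apply, id]
  field_simp
  ring

/-- the radial functions solve the coupled first-order radial Dirac system
`i f′ = λ g`, `i g′ = λ f − (2iν/r) g` on `(0,∞)`. -/
theorem stmt_5 (ν lam : ℝ) (hν : 0 < ν) (hlam : lam ≠ 0) :
    ∀ r : ℝ, 0 < r →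
      DifferentiableAt ℝ (fRad ν lam) r ∧
      DifferentiableAt ℝ (gRad ν lam) r ∧
      Complex.I * deriv (fRad ν lam) r = (lam : ℂ) * gRad ν lam r ∧
      Complex.I * deriv (gRad ν lam) r
        = (lam : ℂ) * fRad ν lam r - (2 * Complex.I * (ν : ℂ) / (r : ℂ)) * gRad ν lam r := by
  intro r hr
  have ha : 0 < |lam| := abs_pos.2 hlam
  have hF := hasDerivAt_rpow_neg_mul_besselJ (ν - 1 / 2) ha hr
  have hG := hasDerivAt_rpow_neg_mul_besselJ_add_one (by linarith : -1 < ν - 1 / 2) ha hr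
  rw [neg_sub, show ν - 1 / 2 + 1 = ν + 1 / 2 by ring] at hF hG
  have hf : HasDerivAt (fRad ν lam) _ r := hF.ofReal_comp
  have hg : HasDerivAt (gRad ν lam) _ r := hG.ofReal_comp.const_mul (-Complex.I * Real.sign lam)
  obtain ⟨hsign, hsign_sq⟩ : (Real.sign lam : ℂ) * |lam| = lam ∧ (Real.sign lam : ℂ) ^ 2 = 1 := by
    rcases hlam.lt_or_gt with h | h <;>
      simp [h, Real.sign_of_neg, Real.sign_of_pos, abs_of_neg, abs_of_pos]
  set F := r ^ ((1 : ℝ) / 2 - ν) * besselJ (ν - 1 / 2) (|lam| * r)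
  set H := r ^ ((1 : ℝ) / 2 - ν) * besselJ (ν + 1 / 2) (|lam| * r)
  have hfr : fRad ν lam r = F := rfl
  have hgr : gRad ν lam r = -Complex.I * Real.sign lam * H := rfl
  refine ⟨hf.differentiableAt, hg.differentiableAt, ?_, ?_⟩
  · rw [hf.deriv, hgr]
    push_cast
    linear_combination
      -Complex.I * Real.sign lam * H * hsign + Complex.I * (|lam| : ℝ) * H * hsign_sq
  · rw [hg.deriv, hfr, hgr]
    push_cast
    linear_combination (F : ℂ) * hsign - Real.sign lam * (|lam| : ℝ) * F * Complex.I_sq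
end

section
/- Let θ, β ∈ ℝ and let s, α ∈ ℝ satisfy s < 1 and 2α + s > 1 (so that α > (1−s)/2 > 0). Then the integral ∫_0^∞ u^{−s} (1 + u²)^{−α} [ 1 + (u² / (2(1+u²))) (cosh(2θ) − 1) ]^{−β} du converges and equals ( Γ(α + (s−1)/2) Γ((1−s)/2) / (2 Γ(α)) ) · F, where F := ( Γ(α) / ( Γ((1−s)/2) Γ(α − (1−s)/2) ) ) ∫_0^1 v^{(1−s)/2 − 1} (1 − v)^{α − (1−s)/2 − 1} (1 + v sinh²θ)^{−β} dv is the Euler integral representation of the Gauss hypergeometric function ₂F₁(β, (1−s)/2; α; −sinh²θ). -/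
/-!
The substitution `v = u² / (1 + u²)` maps `(0, ∞)` bijectively onto `(0, 1)`, with
`1 - v = (1 + u²)⁻¹` and `dv = 2u (1 + u²)⁻² du`. It turns the Euler integrand
`v^(p-1) (1-v)^(q-1) (1 + v sinh²θ)^(-β)` with `p = (1-s)/2`, `q = α - (1-s)/2` into twice the
integrand of the theorem, because `u² (cosh 2θ - 1) / (2(1 + u²)) = v sinh²θ`. Convergence
comes from that of the beta integral (`p, q > 0`), and the Gamma prefactors cancel.
-/

open MeasureTheory Set Real

lemma integrableOn_rpow_mul_one_sub_rpow {p q : ℝ} (hp : 0 < p) (hq : 0 < q) :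
    IntegrableOn (fun v : ℝ => v ^ (p - 1) * (1 - v) ^ (q - 1)) (Ioo 0 1) := by
  have h := (Complex.betaIntegral_convergent (u := p) (v := q) (by simpa) (by simpa)).norm
  rw [intervalIntegrable_iff_integrableOn_Ioo_of_le zero_le_one] at h
  refine h.congr_fun (fun v hv => ?_) measurableSet_Ioo
  dsimp only
  nth_rewrite 2 [← Complex.ofReal_one]
  rw [norm_mul, Complex.norm_cpow_eq_rpow_re_of_pos hv.1, ← Complex.ofReal_sub,
    Complex.norm_cpow_eq_rpow_re_of_pos (sub_pos.2 hv.2)]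
  simp

lemma integrableOn_rpow_mul_one_sub_rpow_mul {p q : ℝ} (hp : 0 < p) (hq : 0 < q) {f : ℝ → ℝ}
    (hf : ContinuousOn f (Icc 0 1)) :
    IntegrableOn (fun v : ℝ => v ^ (p - 1) * (1 - v) ^ (q - 1) * f v) (Ioo 0 1) := by
  have h := integrableOn_rpow_mul_one_sub_rpow hp hq
  rw [← integrableOn_Icc_iff_integrableOn_Ioo] at h ⊢
  exact h.mul_continuousOn hf isCompact_Icc

noncomputable def sqDivOneAddSq (u : ℝ) : ℝ := u ^ 2 / (1 + u ^ 2)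

lemma hasDerivAt_sqDivOneAddSq (u : ℝ) :
    HasDerivAt sqDivOneAddSq (2 * u / (1 + u ^ 2) ^ 2) u := by
  have h := (hasDerivAt_pow 2 u).div ((hasDerivAt_pow 2 u).const_add 1) (by positivity)
  refine h.congr_deriv ?_
  norm_num
  ring

lemma injOn_sqDivOneAddSq : InjOn sqDivOneAddSq (Ioi 0) := by
  intro a (ha : 0 < a) b (hb : 0 < b) h
  rw [sqDivOneAddSq, sqDivOneAddSq, div_eq_div_iff (by positivity) (by positivity)] at h
  nlinarith [mul_pos ha hb]

lemma sqDivOneAddSq_image_Ioi : sqDivOneAddSq '' Ioi 0 = Ioo 0 1 := by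
  ext v
  constructor
  · rintro ⟨u, hu : 0 < u, rfl⟩
    have h1 : (0 : ℝ) < 1 + u ^ 2 := by positivity
    exact ⟨div_pos (by positivity) h1, (div_lt_one h1).2 (by linarith)⟩
  · rintro ⟨hv0, hv1⟩
    have h : 0 < v / (1 - v) := div_pos hv0 (sub_pos.2 hv1)
    refine ⟨√(v / (1 - v)), Real.sqrt_pos.2 h, ?_⟩
    rw [sqDivOneAddSq, Real.sq_sqrt h.le]
    field_simp
    ring

lemma one_sub_sqDivOneAddSq (u : ℝ) : 1 - sqDivOneAddSq u = (1 + u ^ 2)⁻¹ := by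
  rw [sqDivOneAddSq]
  field_simp
  ring

lemma abs_deriv_mul_rpow_sqDivOneAddSq {p q u : ℝ} (hu : 0 < u) :
    |2 * u / (1 + u ^ 2) ^ 2| * (sqDivOneAddSq u ^ (p - 1) * (1 - sqDivOneAddSq u) ^ (q - 1))
      = 2 * (u ^ (2 * p - 1) * (1 + u ^ 2) ^ (-(p + q))) := by
  have hX : (0 : ℝ) < 1 + u ^ 2 := by positivity
  have hψ : sqDivOneAddSq u ^ (p - 1) = u ^ (2 * p - 2) * (1 + u ^ 2) ^ (1 - p) := by
    rw [sqDivOneAddSq, div_rpow (by positivity) hX.le, ← rpow_natCast_mul hu.le,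
      div_eq_mul_inv, ← rpow_neg hX.le]
    ring_nf
  have hφ : (1 - sqDivOneAddSq u) ^ (q - 1) = (1 + u ^ 2) ^ (1 - q) := by
    rw [one_sub_sqDivOneAddSq, ← rpow_neg_one, ← rpow_mul hX.le]
    ring_nf
  have hu' : u ^ (2 * p - 1) = u ^ (2 * p - 2) * u := by
    rw [← rpow_add_one hu.ne']; ring_nf
  have hX' : (1 + u ^ 2) ^ (-(p + q))
      = (1 + u ^ 2) ^ (1 - p) * (1 + u ^ 2) ^ (1 - q) / (1 + u ^ 2) ^ 2 := by
    rw [← rpow_add hX, ← rpow_natCast (1 + u ^ 2) 2, ← rpow_sub hX]; ring_nf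
  rw [abs_of_pos (by positivity), hψ, hφ, hu', hX']
  ring

lemma abs_deriv_smul_comp_sqDivOneAddSq (p q : ℝ) (f : ℝ → ℝ) :
    EqOn (fun u => |2 * u / (1 + u ^ 2) ^ 2| •
        (fun v => v ^ (p - 1) * (1 - v) ^ (q - 1) * f v) (sqDivOneAddSq u))
      (fun u => 2 * (u ^ (2 * p - 1) * (1 + u ^ 2) ^ (-(p + q)) * f (sqDivOneAddSq u)))
      (Ioi 0) := by
  intro u (hu : 0 < u)
  simp only [smul_eq_mul]
  linear_combination f (sqDivOneAddSq u) * abs_deriv_mul_rpow_sqDivOneAddSq (p := p) (q := q) hu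

lemma integrableOn_Ioi_rpow_mul_one_add_sq_rpow_mul_comp {p q : ℝ} (hp : 0 < p) (hq : 0 < q)
    {f : ℝ → ℝ} (hf : ContinuousOn f (Icc 0 1)) :
    IntegrableOn (fun u => u ^ (2 * p - 1) * (1 + u ^ 2) ^ (-(p + q)) * f (sqDivOneAddSq u))
      (Ioi 0) := by
  have h := (integrableOn_image_iff_integrableOn_abs_deriv_smul measurableSet_Ioi
    (fun u _ => (hasDerivAt_sqDivOneAddSq u).hasDerivWithinAt) injOn_sqDivOneAddSq _).1
    (sqDivOneAddSq_image_Ioi ▸ integrableOn_rpow_mul_one_sub_rpow_mul hp hq hf)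
  refine IntegrableOn.congr_fun ?_ (fun u _ => mul_div_cancel_left₀ _ two_ne_zero)
    measurableSet_Ioi
  exact (h.congr_fun (abs_deriv_smul_comp_sqDivOneAddSq p q f) measurableSet_Ioi).div_const 2

lemma integral_Ioi_rpow_mul_one_add_sq_rpow_mul_comp (p q : ℝ) (f : ℝ → ℝ) :
    2 * ∫ u in Ioi 0, u ^ (2 * p - 1) * (1 + u ^ 2) ^ (-(p + q)) * f (sqDivOneAddSq u)
      = ∫ v in (0 : ℝ)..1, v ^ (p - 1) * (1 - v) ^ (q - 1) * f v := by
  rw [intervalIntegral.integral_of_le zero_le_one, integral_Ioc_eq_integral_Ioo,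
    ← sqDivOneAddSq_image_Ioi, integral_image_eq_integral_abs_deriv_smul measurableSet_Ioi
      (fun u _ => (hasDerivAt_sqDivOneAddSq u).hasDerivWithinAt) injOn_sqDivOneAddSq,
    setIntegral_congr_fun measurableSet_Ioi (abs_deriv_smul_comp_sqDivOneAddSq p q f),
    integral_const_mul]

/-- the integral `∫_0^∞ u^{−s}(1+u²)^{−α}[1 + u²(cosh 2θ − 1)/(2(1+u²))]^{−β} du`
converges for `s < 1`, `2α + s > 1`, and equals
`(Γ(α+(s−1)/2)Γ((1−s)/2)/(2Γ(α))) · ₂F₁(β, (1−s)/2; α; −sinh²θ)`, the hypergeometric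
function being given by its Euler integral representation. -/
theorem stmt_7 (θ β s α : ℝ) (hs : s < 1) (hα : 1 < 2 * α + s) :
    IntegrableOn
      (fun u : ℝ => u ^ (-s) * (1 + u ^ 2) ^ (-α) *
        (1 + u ^ 2 / (2 * (1 + u ^ 2)) * (Real.cosh (2 * θ) - 1)) ^ (-β))
      (Set.Ioi 0) ∧
    ∫ u in Set.Ioi (0 : ℝ),
        u ^ (-s) * (1 + u ^ 2) ^ (-α) *
          (1 + u ^ 2 / (2 * (1 + u ^ 2)) * (Real.cosh (2 * θ) - 1)) ^ (-β)
      = Real.Gamma (α + (s - 1) / 2) * Real.Gamma ((1 - s) / 2) / (2 * Real.Gamma α) *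
        (Real.Gamma α / (Real.Gamma ((1 - s) / 2) * Real.Gamma (α - (1 - s) / 2)) *
          ∫ v in (0 : ℝ)..1,
            v ^ ((1 - s) / 2 - 1) * (1 - v) ^ (α - (1 - s) / 2 - 1) *
              (1 + v * Real.sinh θ ^ 2) ^ (-β)) := by
  set p := (1 - s) / 2 with hp_def
  set q := α - (1 - s) / 2 with hq_def
  set f := fun v : ℝ => (1 + v * sinh θ ^ 2) ^ (-β)
  have hp : 0 < p := by rw [hp_def]; linarith
  have hq : 0 < q := by rw [hq_def]; linarith
  have hf : ContinuousOn f (Icc 0 1) := ContinuousOn.rpow_const (by fun_prop) fun v hv =>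
    Or.inl (add_pos_of_pos_of_nonneg one_pos (mul_nonneg hv.1 (sq_nonneg _))).ne'
  have hintegrand : (fun u : ℝ => u ^ (-s) * (1 + u ^ 2) ^ (-α) *
      (1 + u ^ 2 / (2 * (1 + u ^ 2)) * (cosh (2 * θ) - 1)) ^ (-β))
      = fun u => u ^ (2 * p - 1) * (1 + u ^ 2) ^ (-(p + q)) * f (sqDivOneAddSq u) := by
    have hcosh : cosh (2 * θ) - 1 = 2 * sinh θ ^ 2 := by rw [cosh_two_mul, cosh_sq]; ring
    ext u
    rw [show 2 * p - 1 = -s by ring, show -(p + q) = -α by ring, hcosh,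
      show u ^ 2 / (2 * (1 + u ^ 2)) * (2 * sinh θ ^ 2) = u ^ 2 / (1 + u ^ 2) * sinh θ ^ 2 by
        field_simp]
    rfl
  rw [hintegrand]
  refine ⟨integrableOn_Ioi_rpow_mul_one_add_sq_rpow_mul_comp hp hq hf, ?_⟩
  rw [← integral_Ioi_rpow_mul_one_add_sq_rpow_mul_comp p q f, show α + (s - 1) / 2 = q by ring]
  have hΓp := (Gamma_pos_of_pos hp).ne'
  have hΓq := (Gamma_pos_of_pos hq).ne'
  have hΓα := (Gamma_pos_of_pos (by linarith : 0 < α)).ne'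
  field_simp
end

section
/- For s ∈ ℂ with Re s > 3, the Barnes-type series ζ_B(s) := ∑_{ℓ=0}^∞ ((ℓ+1)(ℓ+2)/2) · (ℓ + 3/2)^{−s} converges absolutely. There exists a function h, holomorphic on {s ∈ ℂ : Re s > −1} ∖ {1, 3}, such that h(s) = ζ_B(s) for all s with Re s > 3, and: (i) lim_{s→3} (s − 3) h(s) = 1/2 (residue 1/2 at s = 3); (ii) lim_{s→1} (s − 1) h(s) = −1/8 (residue −1/8 at s = 1); (iii) h is holomorphic at s = 2, i.e. ζ_B has vanishing residue at s = 2; and (iv) h(0) = 0. -/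
open Filter Topology HurwitzZeta Complex Set

/-!
Since `(ℓ + 1)(ℓ + 2)/2 = ((ℓ + 3/2)² − 1/4)/2`, the Barnes series splits as
`ζ_H(s − 2, 3/2)/2 − ζ_H(s, 3/2)/8`, and `ζ_H(s, 3/2) = ζ_H(s, 1/2) − 2^s` where the two
`2^s`-corrections cancel. So `h(s) = ζ_H(s − 2, 1/2)/2 − ζ_H(s, 1/2)/8`, whose only poles are the
simple poles of the Hurwitz zeta function (residue 1) at `s = 3` and `s = 1`, giving residues
`1/2` and `−1/8`. Finally `h(0) = 0` because `ζ_H(0, 1/2) = 1/2 − 1/2` and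
`ζ_H(−2, 1/2) = −B₃(1/2)/3 = 0`.
-/

lemma hasSum_cpow_neg_nat_add_one_add {a : ℝ} (ha : a ∈ Icc 0 1) {s : ℂ} (hs : 1 < s.re) :
    HasSum (fun n : ℕ => ((n : ℂ) + 1 + a) ^ (-s)) (hurwitzZeta a s - (a : ℂ) ^ (-s)) := by
  have H := (hasSum_nat_add_iff' 1).mpr (hasSum_hurwitzZeta_of_one_lt_re ha hs)
  simpa [cpow_neg, add_right_comm] using H

lemma tendsto_sub_mul_nhdsNE_zero {f : ℂ → ℂ} {c : ℂ} (hf : ContinuousAt f c) :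
    Tendsto (fun s => (s - c) * f s) (𝓝[≠] c) (𝓝 0) := by
  have h : ContinuousAt (fun s => (s - c) * f s) c :=
    (continuousAt_id.sub continuousAt_const).mul hf
  simpa using h.tendsto.mono_left nhdsWithin_le_nhds

lemma neg_half_unitAddCircle : -((1 / 2 : ℝ) : UnitAddCircle) = (1 / 2 : ℝ) := by
  rw [← AddCircle.coe_neg, ← AddCircle.coe_add_period]
  norm_num

lemma half_unitAddCircle_ne_zero : ((1 / 2 : ℝ) : UnitAddCircle) ≠ 0 :=
  (AddCircle.coe_eq_zero_iff_of_mem_Ico ⟨by norm_num, by norm_num⟩).not.mpr (by norm_num)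

lemma hurwitzZetaOdd_half (s : ℂ) : hurwitzZetaOdd (1 / 2 : ℝ) s = 0 := by
  have h := hurwitzZetaOdd_neg ((1 / 2 : ℝ) : UnitAddCircle) s
  rw [neg_half_unitAddCircle] at h
  linear_combination h / 2

lemma hurwitzZeta_half_zero : hurwitzZeta (1 / 2 : ℝ) 0 = 0 := by
  rw [hurwitzZeta, hurwitzZetaEven_apply_zero, if_neg half_unitAddCircle_ne_zero,
    hurwitzZetaOdd_half, add_zero]

lemma hurwitzZeta_half_neg_two : hurwitzZeta (1 / 2 : ℝ) (-2) = 0 := by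
  rw [show (-2 : ℂ) = -(2 : ℕ) by norm_num,
    hurwitzZeta_neg_nat two_ne_zero ⟨by norm_num, by norm_num⟩]
  norm_num [Polynomial.bernoulli, Finset.sum_range_succ,
    bernoulli_eq_zero_of_odd (n := 3) ⟨1, rfl⟩ (by norm_num)]

lemma barnes_summand_eq (ℓ : ℕ) (s : ℂ) :
    ((ℓ : ℂ) + 1) * ((ℓ : ℂ) + 2) / 2 * ((ℓ : ℂ) + 3 / 2) ^ (-s)
      = ((ℓ : ℂ) + 3 / 2) ^ (-(s - 2)) / 2 - ((ℓ : ℂ) + 3 / 2) ^ (-s) / 8 := by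
  have hx : (ℓ : ℂ) + 3 / 2 ≠ 0 := ne_zero_of_re_pos (by simp; positivity)
  rw [show -(s - 2) = 2 + -s by ring, cpow_add _ _ hx, cpow_ofNat]
  ring

noncomputable def barnesZeta (s : ℂ) : ℂ :=
  hurwitzZeta (1 / 2 : ℝ) (s - 2) / 2 - hurwitzZeta (1 / 2 : ℝ) s / 8

lemma hasSum_barnesZeta {s : ℂ} (hs : 3 < s.re) :
    HasSum (fun ℓ : ℕ => ((ℓ : ℂ) + 1) * ((ℓ : ℂ) + 2) / 2 * ((ℓ : ℂ) + 3 / 2) ^ (-s))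
      (barnesZeta s) := by
  have hhalf : (1 / 2 : ℝ) ∈ Icc 0 1 := ⟨by norm_num, by norm_num⟩
  have H := ((hasSum_cpow_neg_nat_add_one_add hhalf (s := s - 2) (by simp; linarith)).div_const
    2).sub ((hasSum_cpow_neg_nat_add_one_add hhalf (s := s) (by linarith)).div_const 8)
  have hval : barnesZeta s =
      (hurwitzZeta (1 / 2 : ℝ) (s - 2) - ((1 / 2 : ℝ) : ℂ) ^ (-(s - 2))) / 2
        - (hurwitzZeta (1 / 2 : ℝ) s - ((1 / 2 : ℝ) : ℂ) ^ (-s)) / 8 := by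
    rw [show -(s - 2) = 2 + -s by ring, cpow_add _ _ (by norm_num), cpow_ofNat]
    unfold barnesZeta
    push_cast
    ring
  rw [hval]
  refine H.congr_fun fun ℓ => ?_
  rw [barnes_summand_eq]
  push_cast
  ring_nf

lemma differentiableAt_barnesZeta {s : ℂ} (h1 : s ≠ 1) (h3 : s ≠ 3) :
    DifferentiableAt ℂ barnesZeta s := by
  have h : s - 2 ≠ 1 := fun h => h3 (by linear_combination h)
  exact (((differentiableAt_hurwitzZeta _ h).comp s (differentiableAt_id.sub_const 2)).div_const
    2).sub ((differentiableAt_hurwitzZeta _ h1).div_const 8)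

lemma barnesZeta_residue_three :
    Tendsto (fun s => (s - 3) * barnesZeta s) (𝓝[≠] 3) (𝓝 (1 / 2)) := by
  have hshift : Tendsto (fun s : ℂ => s - 2) (𝓝[≠] 3) (𝓝[≠] 1) := by
    have h := ((Homeomorph.subRight (2 : ℂ)).map_punctured_nhds_eq 3).le
    rwa [Homeomorph.subRight_apply, show (3 : ℂ) - 2 = 1 by norm_num] at h
  have hpole := (hurwitzZeta_residue_one (1 / 2 : ℝ)).comp hshift
  have hreg := tendsto_sub_mul_nhdsNE_zero
    (differentiableAt_hurwitzZeta (1 / 2 : ℝ) (by norm_num : (3 : ℂ) ≠ 1)).continuousAt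
  convert (hpole.div_const 2).sub (hreg.div_const 8) using 2
  · simp only [Function.comp_apply, barnesZeta]
    ring
  · norm_num

lemma barnesZeta_residue_one :
    Tendsto (fun s => (s - 1) * barnesZeta s) (𝓝[≠] 1) (𝓝 (-(1 / 8))) := by
  have hreg := tendsto_sub_mul_nhdsNE_zero
    ((differentiableAt_hurwitzZeta (1 / 2 : ℝ) (by norm_num : (1 : ℂ) - 2 ≠ 1)).comp (1 : ℂ)
      (differentiableAt_id.sub_const 2)).continuousAt
  have hpole := hurwitzZeta_residue_one (1 / 2 : ℝ)
  convert (hreg.div_const 2).sub (hpole.div_const 8) using 2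
  · simp only [Function.comp_apply, id, barnesZeta]
    ring
  · norm_num

lemma barnesZeta_zero : barnesZeta 0 = 0 := by
  rw [barnesZeta, zero_sub, hurwitzZeta_half_neg_two, hurwitzZeta_half_zero]
  norm_num

/-- the Barnes-type series `ζ_B(s) = ∑_ℓ ((ℓ+1)(ℓ+2)/2)(ℓ+3/2)^{−s}`
converges absolutely for `Re s > 3` and extends to a function `h` holomorphic on
`{Re s > −1} ∖ {1, 3}`, with residue `1/2` at `s = 3`, residue `−1/8` at `s = 1`,
holomorphic at `s = 2` (vanishing residue there), and `h(0) = 0`. -/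
theorem stmt_17 :
    (∀ s : ℂ, 3 < s.re →
      Summable fun ℓ : ℕ =>
        ‖((ℓ : ℂ) + 1) * ((ℓ : ℂ) + 2) / 2 * ((ℓ : ℂ) + 3 / 2) ^ (-s)‖) ∧
    ∃ h : ℂ → ℂ,
      DifferentiableOn ℂ h ({s : ℂ | -1 < s.re} \ {(1 : ℂ), 3}) ∧
      (∀ s : ℂ, 3 < s.re →
        h s = ∑' ℓ : ℕ, ((ℓ : ℂ) + 1) * ((ℓ : ℂ) + 2) / 2 * ((ℓ : ℂ) + 3 / 2) ^ (-s)) ∧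
      Tendsto (fun s : ℂ => (s - 3) * h s) (nhdsWithin 3 {(3 : ℂ)}ᶜ) (nhds (1 / 2)) ∧
      Tendsto (fun s : ℂ => (s - 1) * h s) (nhdsWithin 1 {(1 : ℂ)}ᶜ) (nhds (-(1 / 8))) ∧
      DifferentiableAt ℂ h 2 ∧
      h 0 = 0 := by
  refine ⟨fun s hs => summable_norm_iff.mpr (hasSum_barnesZeta hs).summable, barnesZeta,
    ?_, fun s hs => (hasSum_barnesZeta hs).tsum_eq.symm, barnesZeta_residue_three,
    barnesZeta_residue_one, differentiableAt_barnesZeta (by norm_num) (by norm_num),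
    barnesZeta_zero⟩
  rintro s ⟨-, hs⟩
  simp only [mem_insert_iff, mem_singleton_iff, not_or] at hs
  exact (differentiableAt_barnesZeta hs.1 hs.2).differentiableWithinAt
end
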